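/- arXiv:0801.4893 — 7 statements merged into one kernel-verified Lean document; each statement's English description precedes it below -/
import Mathlib

section
/- For every ε > 0, every λ₁,…,λ_n ∈ ℝ, and every s₁ ∈ ℝ, there exist s₂ > s₁ and w ∈ ℝⁿ with ‖w‖ ≤ ε such that for each i = 1,…,n one has λ_i s₂ ≡ w_i (mod 2π), i.e. there exists m_i ∈ ℤ with λ_i s₂ = w_i + 2π m_i. -/
/-!
Fix a step `T > max s₁ 0` and let `x = (λ_i T mod 2π)_i` in the compact torus `(ℝ / 2πℤ)ⁿ`.
By sequential compactness the orbit `k • x` has a convergent subsequence, so the gap between two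
consecutive terms of it is a positive multiple `k • x` inside any given neighbourhood of `0`.
Since `ℝⁿ → (ℝ / 2πℤ)ⁿ` is open, the image of the Euclidean `ε`-ball is such a neighbourhood,
and a preimage `w` of `k • x` in that ball is the required vector for `s₂ = k T`.
-/

open Filter Topology

theorem exists_pos_nsmul_mem_of_mem_nhds_zero {G : Type*} [AddGroup G] [TopologicalSpace G]
    [IsTopologicalAddGroup G] [CompactSpace G] [FirstCountableTopology G] (x : G) {U : Set G}
    (hU : U ∈ 𝓝 0) : ∃ k : ℕ, 0 < k ∧ k • x ∈ U := by
  obtain ⟨a, φ, hφ, hlim⟩ := CompactSpace.tendsto_subseq fun k : ℕ ↦ k • x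
  have hgap : Tendsto (fun k ↦ (φ (k + 1) - φ k) • x) atTop (𝓝 0) := by
    have := (hlim.comp (tendsto_add_atTop_nat 1)).sub hlim
    rw [sub_self] at this
    refine this.congr fun k ↦ ?_
    simp only [Function.comp_apply, sub_nsmul x (hφ k.lt_succ_self).le, sub_eq_add_neg]
  obtain ⟨k, hk⟩ := (hgap.eventually hU).exists
  exact ⟨_, Nat.sub_pos_of_lt (hφ k.lt_succ_self), hk⟩

theorem isOpenMap_euclideanSpace_to_addCircle_pi (ι : Type*) [Fintype ι] (p : ℝ) :
    IsOpenMap fun w : EuclideanSpace ℝ ι ↦ fun i ↦ (w i : AddCircle p) :=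
  (IsOpenMap.piMap (fun _ ↦ QuotientAddGroup.isOpenMap_coe)
    (.of_forall fun _ ↦ QuotientAddGroup.mk_surjective)).comp (PiLp.homeomorph 2 _).isOpenMap

/-- For every `ε > 0`, reals `λ₁,…,λ_n` and `s₁ ∈ ℝ`, there exist `s₂ > s₁` and
`w ∈ ℝⁿ` with `‖w‖ ≤ ε` (Euclidean norm) such that `λ_i s₂ ≡ w_i (mod 2π)` for
every `i`. -/
theorem recurrence_mod_two_pi
    (n : ℕ) (ε : ℝ) (hε : 0 < ε) (lam : Fin n → ℝ) (s₁ : ℝ) :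
    ∃ s₂ : ℝ, s₁ < s₂ ∧ ∃ w : EuclideanSpace ℝ (Fin n), ‖w‖ ≤ ε ∧
      ∀ i : Fin n, ∃ m : ℤ, lam i * s₂ = w i + 2 * Real.pi * m := by
  have : Fact (0 < 2 * Real.pi) := ⟨Real.two_pi_pos⟩
  set T : ℝ := |s₁| + 1
  have hU : (fun w : EuclideanSpace ℝ (Fin n) ↦ fun i ↦ (w i : AddCircle (2 * Real.pi))) ''
      Metric.ball 0 ε ∈ 𝓝 0 := by
    simpa [Pi.zero_def] using (isOpenMap_euclideanSpace_to_addCircle_pi (Fin n) _).image_mem_nhds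
      (Metric.ball_mem_nhds 0 hε)
  obtain ⟨k, hk, w, hw, hkw⟩ := exists_pos_nsmul_mem_of_mem_nhds_zero
    (fun i ↦ ((lam i * T : ℝ) : AddCircle (2 * Real.pi))) hU
  refine ⟨k * T, ?_, w, (mem_ball_zero_iff.1 hw).le, fun i ↦ ?_⟩
  · have : (1 : ℝ) ≤ k := by exact_mod_cast hk
    nlinarith [le_abs_self s₁, abs_nonneg s₁]
  · have hwi : (w i : AddCircle (2 * Real.pi)) = ((k * (lam i * T) : ℝ) : AddCircle _) := by
      rw [← nsmul_eq_mul, AddCircle.coe_nsmul]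
      exact congrFun hkw i
    have hi : ((lam i * (k * T) - w i : ℝ) : AddCircle (2 * Real.pi)) = 0 := by
      rw [AddCircle.coe_sub, sub_eq_zero, hwi]
      ring_nf
    obtain ⟨m, hm⟩ := (AddCircle.coe_eq_zero_iff _).1 hi
    exact ⟨m, by rw [zsmul_eq_mul] at hm; linarith⟩
end

section
/- Let m ≥ 1 and let μ₁,…,μ_m be real numbers that are ℚ-linearly independent. Then for every s₀ ∈ ℝ, the image of the half-line (s₀, ∞) under the map s ↦ (μ₁ s, …, μ_m s) taken modulo 2πℤ^m is dense in the torus ℝ^m / 2πℤ^m. -/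
/-!
Let `Γ ⊆ ℝ^m` be the closure of the subgroup generated by the line `ℝμ` and the periods
`2π e_j`, and let `V` be the largest linear subspace inside `Γ`, with a complement `W`.
If `Γ ∩ W` had nonzero points accumulating at `0`, their normalisations would accumulate at a
unit vector of `W` lying in `V` (multiply by `⌊t / ‖x‖⌋`), so `Γ ∩ W` is discrete. It contains
the projection of `Γ` to `W` along `V`, hence is a lattice in `W`. If `Γ ≠ ℝ^m` then `W ≠ 0`,
and a lattice coordinate composed with the projection is a nonzero functional `f`, integer
valued on `Γ`. Then `f` vanishes on the line, and the integers `n_j = f (2π e_j)`, not all zero,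
satisfy `∑ n_j μ_j = f (2π μ) = 0`. So the line is dense in the torus. For the half-line,
`n • φ 1` accumulates at `0` in the compact torus, so `φ t` is a limit of the points `φ (t + n)`.
-/

open Set Filter Topology Submodule

theorem tendsto_floor_div_mul {α : Type*} {l : Filter α} {r : α → ℝ}
    (hr : Tendsto r l (𝓝[>] 0)) (t : ℝ) :
    Tendsto (fun a => (⌊t / r a⌋ : ℝ) * r a) l (𝓝 t) := by
  have hlower : Tendsto (fun a => t - r a) l (𝓝 t) := by
    simpa using tendsto_const_nhds.sub (tendsto_nhds_of_tendsto_nhdsWithin hr)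
  refine tendsto_of_tendsto_of_tendsto_of_le_of_le' hlower tendsto_const_nhds ?_ ?_
  all_goals
    filter_upwards [hr self_mem_nhdsWithin] with a (ha : 0 < r a)
  · have := Int.sub_one_lt_floor (t / r a)
    rw [div_sub_one ha.ne', div_lt_iff₀ ha] at this
    exact this.le
  · exact (le_div_iff₀ ha).1 (Int.floor_le _)

theorem eq_zero_of_forall_mul_eq_intCast {c : ℝ} (h : ∀ s : ℝ, ∃ n : ℤ, s * c = n) :
    c = 0 := by
  by_contra hc
  obtain ⟨n, hn⟩ := h (c⁻¹ / 2)
  rw [div_mul_eq_mul_div, inv_mul_cancel₀ hc, eq_comm, eq_div_iff two_ne_zero] at hn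
  have : n * 2 = 1 := by exact_mod_cast hn
  omega

theorem IsZLattice.exists_dual_ne_zero_intValued {E : Type*} [NormedAddCommGroup E]
    [NormedSpace ℝ E] [FiniteDimensional ℝ E] [Nontrivial E] (L : Submodule ℤ E)
    [DiscreteTopology L] [IsZLattice ℝ L] :
    ∃ g : Module.Dual ℝ E, g ≠ 0 ∧ ∀ y ∈ L, ∃ n : ℤ, g y = n := by
  let b := Module.Free.chooseBasis ℤ L
  let B := b.ofZLatticeBasis ℝ L
  have := B.index_nonempty
  let i := Classical.arbitrary (Module.Free.ChooseBasisIndex ℤ L)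
  refine ⟨B.coord i, fun h => by simpa using LinearMap.congr_fun h (B i), fun y hy => ?_⟩
  exact ⟨b.repr ⟨y, hy⟩ i, b.ofZLatticeBasis_repr_apply ℝ L ⟨y, hy⟩ i⟩

namespace AddSubgroup

variable {E : Type*} [NormedAddCommGroup E] [NormedSpace ℝ E]

def lineality (Γ : AddSubgroup E) : Submodule ℝ E where
  carrier := {x | ∀ t : ℝ, t • x ∈ Γ}
  add_mem' hx hy t := by simpa only [smul_add] using Γ.add_mem (hx t) (hy t)
  zero_mem' t := by simpa only [smul_zero] using Γ.zero_mem
  smul_mem' c x hx t := by simpa only [smul_smul] using hx (t * c)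

variable {Γ : AddSubgroup E}

theorem lineality_subset : (Γ.lineality : Set E) ⊆ Γ := fun x hx => by
  simpa using hx 1

theorem mem_lineality_of_tendsto {α : Type*} {l : Filter α} [l.NeBot]
    (hΓ : IsClosed (Γ : Set E)) {x : α → E} (hxΓ : ∀ a, x a ∈ Γ) (hx0 : ∀ a, x a ≠ 0)
    (hx : Tendsto x l (𝓝 0)) {v : E} (hv : Tendsto (fun a => ‖x a‖⁻¹ • x a) l (𝓝 v)) :
    v ∈ Γ.lineality := by
  intro t
  have hnorm : Tendsto (fun a => ‖x a‖) l (𝓝[>] 0) :=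
    tendsto_nhdsWithin_iff.2
      ⟨by simpa using hx.norm, .of_forall fun a => norm_pos_iff.2 (hx0 a)⟩
  have hlim := (tendsto_floor_div_mul hnorm t).smul hv
  refine hΓ.mem_of_tendsto hlim (.of_forall fun a => ?_)
  rw [smul_smul, mul_assoc, mul_inv_cancel₀ (norm_ne_zero_iff.2 (hx0 a)), mul_one,
    Int.cast_smul_eq_zsmul]
  exact Γ.zsmul_mem (hxΓ a) _

theorem eventually_eq_zero_of_disjoint_lineality [FiniteDimensional ℝ E]
    (hΓ : IsClosed (Γ : Set E)) {W : Submodule ℝ E} (hW : Disjoint Γ.lineality W) :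
    ∀ᶠ x in 𝓝 (0 : E), x ∈ Γ → x ∈ W → x = 0 := by
  by_contra h
  simp only [not_eventually, Classical.not_imp] at h
  obtain ⟨x, hx, hxΓW⟩ := exists_seq_forall_of_frequently h
  have hK : IsCompact (Metric.sphere (0 : E) 1 ∩ W) :=
    (isCompact_sphere _ _).inter_right W.closed_of_finiteDimensional
  have hmem : ∀ n, ‖x n‖⁻¹ • x n ∈ Metric.sphere (0 : E) 1 ∩ W := fun n =>
    ⟨by simp [norm_smul, inv_mul_cancel₀ (norm_ne_zero_iff.2 (hxΓW n).2.2)],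
      W.smul_mem _ (hxΓW n).2.1⟩
  obtain ⟨v, ⟨hv1, hvW⟩, ψ, hψ, hv⟩ := hK.tendsto_subseq hmem
  have hvΓ : v ∈ Γ.lineality := mem_lineality_of_tendsto hΓ (fun n => (hxΓW (ψ n)).1)
    (fun n => (hxΓW (ψ n)).2.2) (hx.comp hψ.tendsto_atTop) hv
  have hv0 : v = 0 := Submodule.disjoint_def.1 hW v hvΓ hvW
  simp [hv0] at hv1

theorem discreteTopology_comap_of_disjoint_lineality [FiniteDimensional ℝ E]
    (hΓ : IsClosed (Γ : Set E)) {W : Submodule ℝ E} (hW : Disjoint Γ.lineality W) :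
    DiscreteTopology (Γ.toIntSubmodule.comap (W.subtype.restrictScalars ℤ)) := by
  obtain ⟨U, hU, hUo, hU0⟩ :=
    eventually_nhds_iff.1 (eventually_eq_zero_of_disjoint_lineality hΓ hW)
  rw [discreteTopology_iff_isOpen_singleton_zero]
  convert hUo.preimage (continuous_subtype_val.comp continuous_subtype_val)
  ext ⟨⟨y, hyW⟩, hyΓ⟩
  simp only [mem_singleton_iff, mem_preimage, Function.comp_apply, Submodule.mk_eq_zero]
  exact ⟨fun h => h ▸ hU0, fun hy => hU y hy hyΓ hyW⟩

theorem exists_dual_ne_zero_intValued_of_ne_top [FiniteDimensional ℝ E]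
    (hΓ : IsClosed (Γ : Set E)) (hspan : span ℝ (Γ : Set E) = ⊤) (hne : Γ ≠ ⊤) :
    ∃ f : Module.Dual ℝ E, f ≠ 0 ∧ ∀ x ∈ Γ, ∃ n : ℤ, f x = n := by
  obtain ⟨W, hVW⟩ := Γ.lineality.exists_isCompl
  have hW : Nontrivial W := by
    refine Submodule.nontrivial_iff_ne_bot.2 fun hW => hne (eq_top_iff.2 fun x _ => ?_)
    exact lineality_subset ((eq_top_of_isCompl_bot (hW ▸ hVW)).symm ▸ Submodule.mem_top)
  let P : E →ₗ[ℝ] W := W.projectionOnto Γ.lineality hVW.symm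
  let L := Γ.toIntSubmodule.comap (W.subtype.restrictScalars ℤ)
  have hPL : ∀ x ∈ Γ, P x ∈ L := fun x hx => show (P x : E) ∈ Γ by
    have hker : x - P x ∈ Γ.lineality := by
      rw [← ker_projectionOnto hVW.symm, LinearMap.mem_ker, map_sub,
        projectionOnto_apply_left, sub_self]
    simpa using Γ.sub_mem hx (lineality_subset hker)
  have hPsurj : Function.Surjective P := projectionOnto_surjective hVW.symm
  have := discreteTopology_comap_of_disjoint_lineality hΓ hVW.disjoint
  have : IsZLattice ℝ L := by
    refine ⟨eq_top_iff.2 ?_⟩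
    calc (⊤ : Submodule ℝ W) = span ℝ (P '' Γ) := by
          rw [Submodule.span_image, hspan, Submodule.map_top, LinearMap.range_eq_top.2 hPsurj]
      _ ≤ span ℝ L := span_mono (image_subset_iff.2 hPL)
  obtain ⟨g, hg, hgL⟩ := IsZLattice.exists_dual_ne_zero_intValued L
  refine ⟨g ∘ₗ P, fun h => hg ?_, fun x hx => hgL _ (hPL x hx)⟩
  exact (LinearMap.cancel_right hPsurj).1 (h.trans (LinearMap.zero_comp P).symm)

end AddSubgroup

section Kronecker

variable {ι : Type*} [Fintype ι] [DecidableEq ι]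

theorem span_range_single_eq_top {p : ℝ} (hp : p ≠ 0) :
    span ℝ (range fun j : ι => Pi.single j p) = ⊤ := by
  refine eq_top_iff.2 ((Pi.basisFun ℝ ι).span_eq.ge.trans (span_le.2 ?_))
  rintro _ ⟨j, rfl⟩
  have : Pi.basisFun ℝ ι j = p⁻¹ • Pi.single j p := by
    rw [Pi.basisFun_apply, ← Pi.single_smul, smul_eq_mul, inv_mul_cancel₀ hp]
  rw [this]
  exact smul_mem _ _ (subset_span ⟨j, rfl⟩)

theorem AddSubgroup.eq_top_of_linearIndependent {μ : ι → ℝ} (hμ : LinearIndependent ℚ μ)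
    {p : ℝ} (hp : p ≠ 0) {Γ : AddSubgroup (ι → ℝ)} (hΓ : IsClosed (Γ : Set (ι → ℝ)))
    (hline : ∀ s : ℝ, s • μ ∈ Γ) (hper : ∀ j, Pi.single j p ∈ Γ) : Γ = ⊤ := by
  by_contra hne
  have hspan : span ℝ (Γ : Set (ι → ℝ)) = ⊤ :=
    eq_top_iff.2 ((span_range_single_eq_top hp).ge.trans (span_mono (range_subset_iff.2 hper)))
  obtain ⟨f, hf, hfΓ⟩ := exists_dual_ne_zero_intValued_of_ne_top hΓ hspan hne
  have hfμ : f μ = 0 := eq_zero_of_forall_mul_eq_intCast fun s => by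
    simpa using hfΓ _ (hline s)
  choose n hn using fun j => hfΓ _ (hper j)
  have hn0 : (fun j => (n j : ℚ)) ≠ 0 := fun h0 => hf <|
    LinearMap.ext_on_range (span_range_single_eq_top hp) fun j => by
      simpa [hn] using congrFun h0 j
  refine hn0 (funext (Fintype.linearIndependent_iff.1 hμ _ ?_))
  have hdecomp : ∑ j, μ j • Pi.single j p = p • μ := by
    ext i
    simp [Finset.sum_apply, Pi.single_apply, mul_comm]
  calc ∑ j, (n j : ℚ) • μ j = f (∑ j, μ j • Pi.single j p) := by
        simp [map_sum, hn, Rat.smul_def, mul_comm]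
    _ = 0 := by rw [hdecomp, map_smul, hfμ, smul_zero]

end Kronecker

theorem AddMonoidHom.range_subset_closure_image_Ioi {G : Type*} [AddGroup G]
    [TopologicalSpace G] [IsTopologicalAddGroup G] [CompactSpace G] (φ : ℝ →+ G) (s₀ : ℝ) :
    Set.range φ ⊆ closure (φ '' Ioi s₀) := by
  rintro _ ⟨t, rfl⟩
  have h := (mapClusterPt_zero_atTop_nsmul (φ 1)).continuousAt_comp
    (continuous_const_add (φ t)).continuousAt
  rw [add_zero] at h
  rw [mem_closure_iff_clusterPt]
  refine ClusterPt.mono h (le_principal_iff.2 (mem_map.2 ?_))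
  filter_upwards [tendsto_natCast_atTop_atTop.eventually_gt_atTop (s₀ - t)] with n hn
  refine ⟨t + n, by simp only [mem_Ioi]; linarith, ?_⟩
  rw [map_add, ← nsmul_one, map_nsmul]
  rfl

namespace AddCircle

variable {ι : Type*} [Fintype ι] (p : ℝ)

def torusLine (μ : ι → ℝ) : ℝ →+ (ι → AddCircle p) :=
  AddMonoidHom.mk' (fun s j => ((μ j * s : ℝ) : AddCircle p)) fun a b => by
    ext j; simp [mul_add]

theorem denseRange_torusLine [Fact (0 < p)] {μ : ι → ℝ} (hμ : LinearIndependent ℚ μ) :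
    DenseRange (torusLine p μ) := by
  classical
  let π : (ι → ℝ) →+ (ι → AddCircle p) :=
    AddMonoidHom.compLeft (QuotientAddGroup.mk' (AddSubgroup.zmultiples p)) ι
  have hπ : Continuous π :=
    continuous_pi fun j => (AddCircle.continuous_mk' p).comp (continuous_apply j)
  have htop := AddSubgroup.eq_top_of_linearIndependent hμ (Fact.out : 0 < p).ne'
    (Γ := (torusLine p μ).range.topologicalClosure.comap π) (isClosed_closure.preimage hπ)
    (fun s => subset_closure ⟨s, by ext j; simp [torusLine, π, mul_comm]⟩)
    (fun j => by
      have hperiod : π (Pi.single j p) = 0 := by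
        ext i
        by_cases h : i = j
        · subst h; simp [π]
        · simp [π, h]
      simp [hperiod])
  intro y
  obtain ⟨x, rfl⟩ :=
    (QuotientAddGroup.mk_surjective (s := AddSubgroup.zmultiples p)).comp_left y
  exact (htop ▸ AddSubgroup.mem_top x : x ∈ _)

end AddCircle

theorem dense_line_in_torus_general
    (m : ℕ) (μ : Fin m → ℝ)
    (hindep : ∀ q : Fin m → ℚ, q ≠ 0 → ∑ j, (q j : ℝ) * μ j ≠ 0)
    (s₀ : ℝ) :
    Dense ((fun s : ℝ => fun j : Fin m =>
      ((μ j * s : ℝ) : AddCircle (2 * Real.pi))) '' Set.Ioi s₀) := by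
  have : Fact (0 < 2 * Real.pi) := ⟨Real.two_pi_pos⟩
  have hμ : LinearIndependent ℚ μ := Fintype.linearIndependent_iff.2 fun q hq =>
    congrFun (not_imp_not.1 (hindep q) (by simpa only [Rat.smul_def] using hq))
  exact ((AddCircle.denseRange_torusLine _ hμ).mono
    ((AddCircle.torusLine _ μ).range_subset_closure_image_Ioi s₀)).of_closure

/-- If `μ₁,…,μ_m` are `ℚ`-linearly independent reals, then for every `s₀ ∈ ℝ`
the image of the half-line `(s₀, ∞)` under `s ↦ (μ₁ s, …, μ_m s)`, taken modulo
`2πℤ^m`, is dense in the torus `ℝ^m / 2πℤ^m` (realized as the product of `m`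
copies of `ℝ / 2πℤ`). -/
theorem dense_line_in_torus
    (m : ℕ) (hm : 1 ≤ m) (μ : Fin m → ℝ)
    (hindep : ∀ q : Fin m → ℚ, q ≠ 0 → ∑ j, (q j : ℝ) * μ j ≠ 0)
    (s₀ : ℝ) :
    Dense ((fun s : ℝ => fun j : Fin m =>
      ((μ j * s : ℝ) : AddCircle (2 * Real.pi))) '' Set.Ioi s₀) :=
  dense_line_in_torus_general m μ hindep s₀
end

section
/- Let U ⊆ ℝ be an open interval containing 0 and let (Λ_k)_{k∈ℕ} be a family of real-analytic functions Λ_k : U → ℝ. If the elements of the sequence (Λ_k'(0))_{k∈ℕ} are ℚ-linearly independent, then for Lebesgue-almost every μ ∈ U the elements of the sequence (Λ_k(μ))_{k∈ℕ} are ℚ-linearly independent. -/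
/-!
For a fixed nonzero rational vector `q`, the combination `f = ∑ qₖ Λₖ` is analytic on the
interval `U` and has `f'(0) = ∑ qₖ Λₖ'(0) ≠ 0`, so it does not vanish identically on `U`. By the
identity theorem its zeros in `U` are then isolated, hence countable and Lebesgue-null. There are
only countably many choices of `q`, so outside a null set no rational relation holds.
-/

/-- A sequence of real numbers is `ℚ`-linearly independent if every nontrivial
finite rational linear combination of its terms is nonzero. -/
def QLinIndep (a : ℕ → ℝ) : Prop :=
  ∀ N : ℕ, ∀ q : Fin N → ℚ, q ≠ 0 → ∑ k, (q k : ℝ) * a k ≠ 0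

open Filter MeasureTheory Set

theorem AnalyticOnNhd.ae_ne_zero_of_not_eqOn_zero {𝕜 E : Type*} [NontriviallyNormedField 𝕜]
    [SecondCountableTopology 𝕜] [MeasurableSpace 𝕜] [NormedAddCommGroup E] [NormedSpace 𝕜 E]
    {μ : Measure 𝕜} [NullSingletonClass μ] {f : 𝕜 → E} {U : Set 𝕜}
    (hf : AnalyticOnNhd 𝕜 f U) (hU : IsPreconnected U) (hUm : MeasurableSet U)
    (hne : ¬ EqOn f 0 U) :
    ∀ᵐ x ∂μ, x ∈ U → f x ≠ 0 := by
  rw [← ae_restrict_iff' hUm]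
  exact ae_restrict_le_codiscreteWithin hUm
    ((hf.eqOn_zero_or_eventually_ne_zero_of_preconnected hU).resolve_left hne)

theorem IsOpen.deriv_eq_zero_of_eqOn_zero {𝕜 F : Type*} [NontriviallyNormedField 𝕜]
    [NormedAddCommGroup F] [NormedSpace 𝕜 F] {f : 𝕜 → F} {U : Set 𝕜} {x : 𝕜}
    (hU : IsOpen U) (hx : x ∈ U) (h : EqOn f 0 U) :
    deriv f x = 0 :=
  (eventuallyEq_of_mem (hU.mem_nhds hx) h).deriv_eq.trans (deriv_const x 0)

theorem deriv_sum_const_mul {𝕜 ι : Type*} [NontriviallyNormedField 𝕜] (s : Finset ι)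
    (c : ι → 𝕜) {Λ : ι → 𝕜 → 𝕜} {x : 𝕜} (hΛ : ∀ k ∈ s, DifferentiableAt 𝕜 (Λ k) x) :
    deriv (fun y => ∑ k ∈ s, c k * Λ k y) x = ∑ k ∈ s, c k * deriv (Λ k) x := by
  rw [deriv_fun_sum fun k hk => (hΛ k hk).const_mul (c k)]
  exact Finset.sum_congr rfl fun k hk => deriv_const_mul (c k) (hΛ k hk)

/-- If `(Λ_k)` is a family of real-analytic functions on an open interval `U`
containing `0` (an open interval being an open order-connected subset of `ℝ`)
and the derivatives `(Λ_k'(0))` are `ℚ`-linearly independent, then for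
Lebesgue-almost every `μ ∈ U` the values `(Λ_k(μ))` are `ℚ`-linearly
independent. -/
theorem ae_qLinIndep_of_analytic
    (U : Set ℝ) (hUopen : IsOpen U) (hUconn : U.OrdConnected)
    (hU0 : (0 : ℝ) ∈ U)
    (Λ : ℕ → ℝ → ℝ)
    (hanalytic : ∀ k, ∀ x ∈ U, AnalyticAt ℝ (Λ k) x)
    (hindep : QLinIndep (fun k => deriv (Λ k) 0)) :
    ∀ᵐ μ ∂MeasureTheory.volume, μ ∈ U → QLinIndep (fun k => Λ k μ) := by
  have hcomb (N : ℕ) (q : Fin N → ℚ) (hq : q ≠ 0) :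
      ∀ᵐ μ ∂volume, μ ∈ U → ∑ k, (q k : ℝ) * Λ k μ ≠ 0 := by
    have hf : AnalyticOnNhd ℝ (fun x => ∑ k, (q k : ℝ) * Λ k x) U := fun x hx =>
      Finset.analyticAt_fun_sum _ fun k _ => analyticAt_const.mul (hanalytic k x hx)
    refine hf.ae_ne_zero_of_not_eqOn_zero hUconn.isPreconnected hUopen.measurableSet
      fun hzero => hindep N q hq ?_
    exact (deriv_sum_const_mul (Λ := fun k : Fin N => Λ k) _ _
      fun k _ => (hanalytic k 0 hU0).differentiableAt).symm.trans
      (hUopen.deriv_eq_zero_of_eqOn_zero hU0 hzero)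
  filter_upwards [ae_all_iff.2 fun N => ae_all_iff.2 fun q =>
    eventually_imp_distrib_left.2 (hcomb N q)] with μ hμ hμU N q hq using hμ N q hq hμU
end

section
/- Let F be a subfield of ℝ containing ℚ and let β ∈ ℝ be transcendental over F. Then the family of real numbers (1/(1 + qβ))_{q∈ℚ} is linearly independent over F; that is, for any finite set of distinct rationals q₁,…,q_N and any f₁,…,f_N ∈ F, if Σ_{k=1}^N f_k/(1 + q_k β) = 0 then f₁ = ⋯ = f_N = 0. -/
/-!
Substituting `y = β⁻¹`, which is again transcendental, turns `1 / (1 + qβ)` into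
`y · (y + q)⁻¹`. The partial fractions `(y - a)⁻¹`, `a ∈ F`, are linearly independent over `F`
(clearing denominators gives a polynomial vanishing at `y`, hence identically; evaluating it at
the poles kills all coefficients), and multiplication by `y ≠ 0` preserves linear independence.
-/

theorem Transcendental.ne_zero {F E : Type*} [Field F] [Field E] [Algebra F E] {x : E}
    (hx : Transcendental F x) : x ≠ 0 := by
  rintro rfl
  exact hx isAlgebraic_zero

theorem Transcendental.inv {F E : Type*} [Field F] [Field E] [Algebra F E] {x : E}
    (hx : Transcendental F x) : Transcendental F x⁻¹ :=
  fun h ↦ hx (IsAlgebraic.inv_iff.mp h)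

theorem Transcendental.linearIndependent_inv_one_add_mul
    {F E : Type*} [Field F] [Field E] [Algebra F E] {x : E} (hx : Transcendental F x) :
    LinearIndependent F fun a : F ↦ (1 + algebraMap F E a * x)⁻¹ := by
  have hx0 : x ≠ 0 := hx.ne_zero
  have hfun : (fun a : F ↦ (1 + algebraMap F E a * x)⁻¹) =
      LinearMap.mulLeft F x⁻¹ ∘ (fun a ↦ (x⁻¹ - algebraMap F E a)⁻¹) ∘ Neg.neg := by
    ext a
    simp only [Function.comp_apply, map_neg, sub_neg_eq_add, LinearMap.mulLeft_apply]
    rw [← mul_inv, mul_add, mul_inv_cancel₀ hx0, mul_comm x]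
  rw [hfun]
  exact (hx.inv.linearIndependent_sub_inv.comp Neg.neg neg_injective).map' _
    (LinearMap.ker_eq_bot.mpr (mul_right_injective₀ (inv_ne_zero hx0)))

/-- If `F` is a subfield of `ℝ` and `β ∈ ℝ` is transcendental over `F`, then the
family `(1/(1 + qβ))_{q ∈ ℚ}` is linearly independent over `F`: for any distinct
rationals `q₁,…,q_N` and `f₁,…,f_N ∈ F`, if `Σ f_k/(1 + q_k β) = 0` then all
`f_k = 0`. -/
theorem inv_one_add_rat_mul_linearIndependent
    (F : Subfield ℝ) (β : ℝ) (hβ : Transcendental F β)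
    (N : ℕ) (q : Fin N → ℚ) (hq : Function.Injective q)
    (f : Fin N → F)
    (hsum : ∑ k, (f k : ℝ) / (1 + (q k : ℝ) * β) = 0) :
    ∀ k, f k = 0 := by
  have hind := hβ.linearIndependent_inv_one_add_mul.comp (fun k ↦ (q k : F))
    (Rat.cast_injective.comp hq)
  refine Fintype.linearIndependent_iff.mp hind f ?_
  simpa [div_eq_mul_inv, Algebra.smul_def, Subfield.algebraMap_ofSubfield] using hsum
end

section
/- For k ∈ ℕ (k ≥ 0), let φ_k(x) = (k! 2^k √π)^{−1/2} e^{−x²/2} H_k(x) be the k-th Hermite function. Let a, b, c ∈ ℝ with a < 0 and suppose that √(1−a) and b are algebraically independent over ℚ. Then the elements of the sequence (∫_ℝ e^{a x² + b x + c} φ_k(x)² dx)_{k≥0} are ℚ-linearly independent. -/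
/-- The `k`-th (physicists') Hermite polynomial `H_k(x) = (-1)^k e^{x²} (d/dx)^k e^{-x²}`. -/
noncomputable def hermitePoly (k : ℕ) (x : ℝ) : ℝ :=
  (-1) ^ k * Real.exp (x ^ 2) * iteratedDeriv k (fun y => Real.exp (-y ^ 2)) x

/-- The `k`-th Hermite function `φ_k(x) = (k! 2^k √π)^{-1/2} e^{-x²/2} H_k(x)`. -/
noncomputable def hermiteFun (k : ℕ) (x : ℝ) : ℝ :=
  (Real.sqrt (k.factorial * 2 ^ k * Real.sqrt Real.pi))⁻¹ *
    Real.exp (-x ^ 2 / 2) * hermitePoly k x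

/-!
Put `p = 1 - a`, `s = √p` and `G_n = ∫ xⁿ e^{-p x² + b x} dx`. Since
`e^{a x² + b x + c} φ_k(x)² = e^c (k! 2^k √π)⁻¹ H_k(x)² e^{-p x² + b x}` and the `H_k²` have the
distinct degrees `2k`, a rational relation among the integrals is an identity
`∫ R(x) e^{-p x² + b x} dx = 0` with `0 ≠ R ∈ ℚ[X]`. Integration by parts gives
`2p G_{n+1} = b G_n + n G_{n-1}`, so `(2s²)ⁿ G_n = G_0 S_n(b, s)` with `S_n ∈ ℚ[s][b]` monic of
degree `n` in `b`. Hence `(2s²)^{deg R} ∫ R(x) e^{-p x² + b x} dx = G_0 F(b, s)`, where the leading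
coefficient of `F` in `b` is that of `R`. So `F ≠ 0`, hence `F(b, s) ≠ 0` by algebraic independence,
while `G_0 > 0`.
-/

open Polynomial Real MeasureTheory Function

theorem Polynomial.linearIndependent_of_natDegree_injective {K ι : Type*} [Field K]
    {P : ι → K[X]} (h0 : ∀ i, P i ≠ 0) (hP : Injective fun i => (P i).natDegree) :
    LinearIndependent K P := by
  rw [linearIndependent_iff']
  intro s g hsum i hi
  have hdeg (j : ι) (hj : g j ≠ 0) : (g j • P j).degree = (P j).natDegree := by
    rw [smul_eq_C_mul, degree_C_mul hj, degree_eq_natDegree (h0 j)]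
  have hpair :
      Set.Pairwise {j | j ∈ s ∧ g j • P j ≠ 0} (Ne on (degree ∘ fun j => g j • P j)) := by
    rintro j ⟨-, hj⟩ j' ⟨-, hj'⟩ hne
    simp only [onFun, comp_apply, hdeg j (left_ne_zero_of_smul hj),
      hdeg j' (left_ne_zero_of_smul hj'), ne_eq, Nat.cast_inj]
    exact hP.ne hne
  by_contra hgi
  have hle := Finset.le_sup (f := fun j => (g j • P j).degree) hi
  rw [← degree_sum_eq_of_disjoint _ s hpair, hsum, degree_zero, hdeg i hgi] at hle
  exact WithBot.coe_ne_bot (le_bot_iff.mp hle)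

theorem AlgebraicIndependent.eval₂_aeval_ne_zero {R A : Type*} [CommRing R] [CommRing A]
    [Algebra R A] {s b : A} (h : AlgebraicIndependent R ![s, b]) {F : R[X][X]} (hF : F ≠ 0) :
    F.eval₂ (aeval s).toRingHom b ≠ 0 := by
  let s' : Algebra.adjoin R (![s, b] '' {0}) := ⟨s, Algebra.subset_adjoin ⟨0, rfl, rfl⟩⟩
  have hb : Transcendental (Algebra.adjoin R (![s, b] '' {0})) b :=
    h.transcendental_adjoin (i := 1) (by simp)
  have hs : Injective (aeval (R := R) s') := by
    rw [← transcendental_iff_injective, Subalgebra.transcendental_iff_transcendental_val]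
    exact h.transcendental 0
  have key : aeval b (F.map (aeval s').toRingHom) = F.eval₂ (aeval s).toRingHom b := by
    rw [aeval_def, eval₂_map]
    congr 1
    ext <;> simp [s']
  rw [← key]
  exact fun h0 => hF ((Polynomial.map_eq_zero_iff hs).mp (transcendental_iff.mp hb _ h0))

noncomputable def physHermite : ℕ → ℚ[X]
  | 0 => 1
  | k + 1 => C 2 * X * physHermite k - derivative (physHermite k)

theorem iteratedDeriv_exp_neg_sq (k : ℕ) :
    iteratedDeriv k (fun y : ℝ => exp (-y ^ 2)) =
      fun x => (-1) ^ k * aeval x (physHermite k) * exp (-x ^ 2) := by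
  induction k with
  | zero => simp [physHermite]
  | succ k ih =>
    ext x
    have hq : HasDerivAt (fun x : ℝ => -x ^ 2) (-(2 * x)) x := by
      simpa using (hasDerivAt_pow 2 x).fun_neg
    have h := (((physHermite k).hasDerivAt_aeval x).const_mul ((-1 : ℝ) ^ k)).fun_mul hq.exp
    rw [iteratedDeriv_succ, ih, h.deriv, physHermite]
    simp only [map_sub, map_mul, aeval_X, aeval_C, eq_ratCast, Rat.cast_ofNat]
    ring

theorem hermitePoly_eq_aeval (k : ℕ) (x : ℝ) : hermitePoly k x = aeval x (physHermite k) := by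
  rw [hermitePoly, iteratedDeriv_exp_neg_sq]
  have hexp : exp (x ^ 2) * exp (-x ^ 2) = 1 := by rw [← exp_add, add_neg_cancel, exp_zero]
  have hsign : ((-1 : ℝ) ^ k) ^ 2 = 1 := by
    rw [← pow_mul, mul_comm, pow_mul, neg_one_sq, one_pow]
  linear_combination aeval x (physHermite k) * exp (x ^ 2) * exp (-x ^ 2) * hsign +
    aeval x (physHermite k) * hexp

theorem leadingCoeff_physHermite_and_natDegree (k : ℕ) :
    (physHermite k).leadingCoeff = 2 ^ k ∧ (physHermite k).natDegree = k := by
  induction k with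
  | zero => simp [physHermite]
  | succ k ih =>
    obtain ⟨hlc, hdeg⟩ := ih
    have hne : physHermite k ≠ 0 := leadingCoeff_ne_zero.mp (by simp [hlc])
    have h2X : (C 2 * X * physHermite k).natDegree = k + 1 := by
      rw [natDegree_mul (by simp) hne, natDegree_C_mul_X _ two_ne_zero, hdeg, add_comm]
    have hlt : (derivative (physHermite k)).natDegree < (C 2 * X * physHermite k).natDegree :=
      (natDegree_derivative_le _).trans_lt (by omega)
    rw [physHermite, leadingCoeff_sub_of_degree_lt (degree_lt_degree hlt),
      natDegree_sub_eq_left_of_natDegree_lt hlt, leadingCoeff_mul, leadingCoeff_C_mul_X, hlc,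
      pow_succ']
    exact ⟨rfl, h2X⟩

theorem linearIndependent_physHermite_sq : LinearIndependent ℚ fun k => physHermite k ^ 2 := by
  refine linearIndependent_of_natDegree_injective (fun k => pow_ne_zero _ ?_) fun k l h => ?_
  · exact leadingCoeff_ne_zero.mp (by simp [(leadingCoeff_physHermite_and_natDegree k).1])
  · simpa [(leadingCoeff_physHermite_and_natDegree _).2] using h

theorem hermiteFun_sq (k : ℕ) (x : ℝ) :
    hermiteFun k x ^ 2 =
      (k.factorial * 2 ^ k * sqrt π)⁻¹ * (aeval x (physHermite k ^ 2) * exp (-x ^ 2)) := by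
  rw [hermiteFun, hermitePoly_eq_aeval, mul_pow, mul_pow, inv_pow, sq_sqrt (by positivity), map_pow,
    ← exp_nat_mul]
  ring_nf

theorem integral_exp_mul_hermiteFun_sq (a b c : ℝ) (k : ℕ) :
    ∫ x, exp (a * x ^ 2 + b * x + c) * hermiteFun k x ^ 2 =
      exp c * (k.factorial * 2 ^ k * sqrt π)⁻¹ *
        ∫ x, aeval x (physHermite k ^ 2) * exp (-(1 - a) * x ^ 2 + b * x) := by
  rw [← integral_const_mul]
  congr 1
  ext x
  have hexp :
      exp (a * x ^ 2 + b * x + c) * exp (-x ^ 2) = exp c * exp (-(1 - a) * x ^ 2 + b * x) := by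
    rw [← exp_add, ← exp_add]
    ring_nf
  rw [hermiteFun_sq]
  linear_combination (k.factorial * 2 ^ k * sqrt π)⁻¹ * aeval x (physHermite k ^ 2) * hexp

noncomputable def gaussianMoment (p b : ℝ) (n : ℕ) : ℝ :=
  ∫ x, x ^ n * exp (-p * x ^ 2 + b * x)

theorem integrable_pow_mul_exp_neg_mul_sq_add {p : ℝ} (hp : 0 < p) (b : ℝ) (n : ℕ) :
    Integrable fun x : ℝ => x ^ n * exp (-p * x ^ 2 + b * x) := by
  have hint : Integrable fun x : ℝ => x ^ n * exp (-(p / 2) * x ^ 2) := by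
    simpa using integrable_rpow_mul_exp_neg_mul_sq (half_pos hp) (s := n)
      (by linarith [n.cast_nonneg (α := ℝ)])
  refine (hint.bdd_mul (f := fun x => exp (-(p / 2) * x ^ 2 + b * x)) (c := exp (b ^ 2 / (2 * p)))
    (by fun_prop) ?_).congr ?_
  · refine Filter.Eventually.of_forall fun x => ?_
    rw [norm_of_nonneg (exp_pos _).le, exp_le_exp, le_div_iff₀ (by positivity)]
    nlinarith [sq_nonneg (p * x - b)]
  · refine Filter.Eventually.of_forall fun x => ?_
    dsimp only
    rw [mul_left_comm, ← exp_add]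
    ring_nf

/-- At `n = 0` the truncated `n - 1` is harmless, as its coefficient vanishes. -/
theorem two_mul_gaussianMoment_succ {p : ℝ} (hp : 0 < p) (b : ℝ) (n : ℕ) :
    2 * p * gaussianMoment p b (n + 1) =
      b * gaussianMoment p b n + n * gaussianMoment p b (n - 1) := by
  set g : ℕ → ℝ → ℝ := fun k x => x ^ k * exp (-p * x ^ 2 + b * x)
  have hI (k : ℕ) : Integrable (g k) := integrable_pow_mul_exp_neg_mul_sq_add hp b k
  have hderiv (x : ℝ) :
      HasDerivAt (g n) (n * g (n - 1) x + b * g n x - 2 * p * g (n + 1) x) x := by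
    have hq : HasDerivAt (fun x : ℝ => -p * x ^ 2 + b * x) (-p * (2 * x) + b) x := by
      simpa using ((hasDerivAt_pow 2 x).const_mul (-p)).fun_add ((hasDerivAt_id x).const_mul b)
    refine ((hasDerivAt_pow n x).mul hq.exp).congr_deriv ?_
    simp only [g]
    ring
  have hA : Integrable fun x => n * g (n - 1) x + b * g n x :=
    ((hI _).const_mul _).add ((hI _).const_mul _)
  have hzero := integral_eq_zero_of_hasDerivAt_of_integrable hderiv
    (hA.sub ((hI _).const_mul _)) (hI n)
  rw [integral_sub hA ((hI _).const_mul _), integral_add ((hI _).const_mul _) ((hI _).const_mul _),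
    integral_const_mul, integral_const_mul, integral_const_mul] at hzero
  simp only [gaussianMoment]
  linarith

theorem aeval_mul_exp_eq_sum (p b x : ℝ) (P : ℚ[X]) :
    aeval x P * exp (-p * x ^ 2 + b * x) =
      ∑ n ∈ Finset.range (P.natDegree + 1),
        (P.coeff n : ℝ) * (x ^ n * exp (-p * x ^ 2 + b * x)) := by
  simp only [aeval_eq_sum_range, Finset.sum_mul, Rat.smul_def, mul_assoc]

theorem integrable_aeval_mul_exp {p : ℝ} (hp : 0 < p) (b : ℝ) (P : ℚ[X]) :
    Integrable fun x : ℝ => aeval x P * exp (-p * x ^ 2 + b * x) := by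
  simp only [aeval_mul_exp_eq_sum]
  exact integrable_finsetSum _ fun n _ => (integrable_pow_mul_exp_neg_mul_sq_add hp b n).const_mul _

theorem integral_aeval_mul_exp {p : ℝ} (hp : 0 < p) (b : ℝ) (P : ℚ[X]) :
    ∫ x, aeval x P * exp (-p * x ^ 2 + b * x) =
      ∑ n ∈ Finset.range (P.natDegree + 1), (P.coeff n : ℝ) * gaussianMoment p b n := by
  simp only [aeval_mul_exp_eq_sum]
  rw [integral_finsetSum _ fun n _ => (integrable_pow_mul_exp_neg_mul_sq_add hp b n).const_mul _]
  simp only [integral_const_mul, gaussianMoment]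

theorem integral_aeval_sum_smul_mul_exp {ι : Type*} {p : ℝ} (hp : 0 < p) (b : ℝ)
    (t : Finset ι) (c : ι → ℚ) (P : ι → ℚ[X]) :
    ∫ x, aeval x (∑ i ∈ t, c i • P i) * exp (-p * x ^ 2 + b * x) =
      ∑ i ∈ t, (c i : ℝ) * ∫ x, aeval x (P i) * exp (-p * x ^ 2 + b * x) := by
  simp only [map_sum, map_smul, Finset.sum_mul, Rat.smul_def, mul_assoc]
  rw [integral_finsetSum _ fun i _ => (integrable_aeval_mul_exp hp b (P i)).const_mul _]
  simp only [integral_const_mul]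

/-- The `S_n` of the header, as a polynomial in `b` over `ℚ[s]`. -/
noncomputable def gaussianMomentPoly : ℕ → ℚ[X][X]
  | 0 => 1
  | 1 => X
  | n + 2 =>
    X * gaussianMomentPoly (n + 1) + C (C (2 * (n + 1) : ℚ) * X ^ 2) * gaussianMomentPoly n

theorem gaussianMomentPoly_monic_natDegree :
    ∀ n, (gaussianMomentPoly n).Monic ∧ (gaussianMomentPoly n).natDegree = n
  | 0 => by simp [gaussianMomentPoly]
  | 1 => by simp [gaussianMomentPoly]
  | n + 2 => by
    obtain ⟨hm₁, hd₁⟩ := gaussianMomentPoly_monic_natDegree (n + 1)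
    obtain ⟨-, hd₀⟩ := gaussianMomentPoly_monic_natDegree n
    have hXd : (X * gaussianMomentPoly (n + 1)).natDegree = n + 2 := by
      rw [natDegree_X_mul hm₁.ne_zero, hd₁]
    have hlt : (C (C (2 * (n + 1) : ℚ) * X ^ 2) * gaussianMomentPoly n).degree <
        (X * gaussianMomentPoly (n + 1)).degree :=
      degree_lt_degree ((natDegree_C_mul_le _ _).trans_lt (by omega))
    refine ⟨(monic_X.mul hm₁).add_of_left hlt, ?_⟩
    rw [gaussianMomentPoly, natDegree_add_eq_left_of_degree_lt hlt, hXd]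

theorem pow_mul_gaussianMoment_eq_eval₂ {s : ℝ} (hs : s ≠ 0) (b : ℝ) : ∀ n : ℕ,
    (2 * s ^ 2) ^ n * gaussianMoment (s ^ 2) b n =
      gaussianMoment (s ^ 2) b 0 * (gaussianMomentPoly n).eval₂ (aeval s).toRingHom b
  | 0 => by simp [gaussianMomentPoly]
  | 1 => by
    have h := two_mul_gaussianMoment_succ (by positivity : 0 < s ^ 2) b 0
    rw [CharP.cast_eq_zero, zero_mul, add_zero] at h
    rw [gaussianMomentPoly, eval₂_X, pow_one, h, mul_comm]
  | n + 2 => by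
    have hp : 0 < s ^ 2 := by positivity
    have h₁ := pow_mul_gaussianMoment_eq_eval₂ hs b (n + 1)
    have h₀ := pow_mul_gaussianMoment_eq_eval₂ hs b n
    have hrec := two_mul_gaussianMoment_succ hp b (n + 1)
    simp only [gaussianMomentPoly, eval₂_add, eval₂_mul, eval₂_X, eval₂_C]
    simp only [AlgHom.toRingHom_eq_coe, RingHom.coe_coe, map_mul, map_pow, aeval_C, aeval_X,
      eq_ratCast, Rat.cast_ofNat, Rat.cast_add, Rat.cast_natCast, Rat.cast_one] at h₁ h₀ ⊢
    rw [Nat.add_sub_cancel] at hrec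
    push_cast at hrec
    linear_combination (2 * s ^ 2) ^ (n + 1) * hrec + b * h₁ + 2 * (n + 1) * s ^ 2 * h₀

/-- The `F` of the header, built from `R = P`. -/
noncomputable def gaussianIntegralPoly (P : ℚ[X]) : ℚ[X][X] :=
  ∑ n ∈ Finset.range (P.natDegree + 1),
    C (C (P.coeff n) * (C 2 * X ^ 2) ^ (P.natDegree - n)) * gaussianMomentPoly n

theorem coeff_gaussianIntegralPoly_natDegree (P : ℚ[X]) :
    (gaussianIntegralPoly P).coeff P.natDegree = C P.leadingCoeff := by
  rw [gaussianIntegralPoly, finsetSum_coeff, Finset.sum_eq_single P.natDegree]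
  · obtain ⟨hmonic, hdeg⟩ := gaussianMomentPoly_monic_natDegree P.natDegree
    have hone : (gaussianMomentPoly P.natDegree).coeff P.natDegree = 1 := by
      have h := hmonic.coeff_natDegree
      rwa [hdeg] at h
    rw [coeff_C_mul, hone, Nat.sub_self, pow_zero, mul_one, mul_one, leadingCoeff]
  · intro n hn hne
    have hlt : (gaussianMomentPoly n).natDegree < P.natDegree := by
      rw [(gaussianMomentPoly_monic_natDegree n).2]
      exact lt_of_le_of_ne (Nat.lt_succ_iff.mp (Finset.mem_range.mp hn)) hne
    rw [coeff_C_mul, coeff_eq_zero_of_natDegree_lt hlt, mul_zero]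
  · simp

theorem gaussianIntegralPoly_ne_zero {P : ℚ[X]} (hP : P ≠ 0) :
    gaussianIntegralPoly P ≠ 0 := by
  intro h
  have := coeff_gaussianIntegralPoly_natDegree P
  rw [h, coeff_zero, eq_comm, C_eq_zero, leadingCoeff_eq_zero] at this
  exact hP this

theorem pow_mul_integral_aeval_mul_exp {s : ℝ} (hs : s ≠ 0) (b : ℝ) (P : ℚ[X]) :
    (2 * s ^ 2) ^ P.natDegree * ∫ x, aeval x P * exp (-s ^ 2 * x ^ 2 + b * x) =
      gaussianMoment (s ^ 2) b 0 * (gaussianIntegralPoly P).eval₂ (aeval s).toRingHom b := by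
  rw [integral_aeval_mul_exp (by positivity) b, gaussianIntegralPoly, eval₂_finsetSum,
    Finset.mul_sum, Finset.mul_sum]
  refine Finset.sum_congr rfl fun n hn => ?_
  have hn : n ≤ P.natDegree := Nat.lt_succ_iff.mp (Finset.mem_range.mp hn)
  have h := pow_mul_gaussianMoment_eq_eval₂ hs b n
  have hpow : (2 * s ^ 2) ^ P.natDegree = (2 * s ^ 2) ^ (P.natDegree - n) * (2 * s ^ 2) ^ n := by
    rw [← pow_add, Nat.sub_add_cancel hn]
  rw [eval₂_mul, eval₂_C]
  simp only [AlgHom.toRingHom_eq_coe, RingHom.coe_coe, map_mul, map_pow, aeval_C, aeval_X,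
    eq_ratCast, Rat.cast_ofNat] at h ⊢
  linear_combination (P.coeff n : ℝ) * (2 * s ^ 2) ^ (P.natDegree - n) * h +
    (P.coeff n : ℝ) * gaussianMoment (s ^ 2) b n * hpow

theorem integral_aeval_mul_exp_ne_zero {s b : ℝ} (h : AlgebraicIndependent ℚ ![s, b])
    {P : ℚ[X]} (hP : P ≠ 0) : ∫ x, aeval x P * exp (-s ^ 2 * x ^ 2 + b * x) ≠ 0 := by
  have hs : s ≠ 0 := fun hs => h.transcendental 0 (hs ▸ isAlgebraic_zero)
  have hG : gaussianMoment (s ^ 2) b 0 ≠ 0 := by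
    simpa [gaussianMoment] using (integral_exp_pos (by
      simpa using integrable_pow_mul_exp_neg_mul_sq_add (by positivity : 0 < s ^ 2) b 0)).ne'
  intro h0
  have := pow_mul_integral_aeval_mul_exp hs b P
  rw [h0, mul_zero, eq_comm] at this
  exact mul_ne_zero hG (h.eval₂_aeval_ne_zero (gaussianIntegralPoly_ne_zero hP)) this

/-- If `a < 0` and `√(1-a)` and `b` are algebraically independent over `ℚ`, then
the numbers `∫ e^{ax² + bx + c} φ_k(x)² dx`, `k ≥ 0`, are `ℚ`-linearly
independent. -/
theorem qLinIndep_gaussian_weighted_hermite_diagonal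
    (a b c : ℝ) (ha : a < 0)
    (hab : AlgebraicIndependent ℚ ![Real.sqrt (1 - a), b]) :
    QLinIndep (fun k =>
      ∫ x : ℝ, Real.exp (a * x ^ 2 + b * x + c) * hermiteFun k x ^ 2) := by
  intro N q hq
  have hs : sqrt (1 - a) ^ 2 = 1 - a := sq_sqrt (by linarith)
  set R : ℚ[X] := ∑ k : Fin N, (q k / (k.val.factorial * 2 ^ k.val)) • physHermite k ^ 2
  have hR : R ≠ 0 := fun h0 => hq <| funext fun k => by
    have := Fintype.linearIndependent_iff.mp
      (linearIndependent_physHermite_sq.comp Fin.val Fin.val_injective) _ h0 k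
    simpa [Nat.factorial_ne_zero] using this
  have hsum : ∑ k : Fin N, (q k : ℝ) * ∫ x, exp (a * x ^ 2 + b * x + c) * hermiteFun k x ^ 2 =
      exp c * (sqrt π)⁻¹ * ∫ x, aeval x R * exp (-sqrt (1 - a) ^ 2 * x ^ 2 + b * x) := by
    rw [integral_aeval_sum_smul_mul_exp (by rw [hs]; linarith) b, Finset.mul_sum]
    refine Finset.sum_congr rfl fun k _ => ?_
    rw [integral_exp_mul_hermiteFun_sq, hs]
    push_cast
    field_simp
  rw [hsum]
  exact mul_ne_zero (by positivity) (integral_aeval_mul_exp_ne_zero hab hR)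
end

section
/- Let l₁, l₂, l₃ > 0 be such that the three real numbers (l₁l₂)², (l₁l₃)², (l₂l₃)² are ℚ-linearly independent. Then the eigenvalues λ_{k₁,k₂,k₃} = π²(k₁²/l₁² + k₂²/l₂² + k₃²/l₃²) of the Dirichlet Laplacian on the box (0,l₁)×(0,l₂)×(0,l₃) are all simple; that is, the map (k₁,k₂,k₃) ↦ k₁²/l₁² + k₂²/l₂² + k₃²/l₃² is injective on triples of positive integers. -/
/-! Multiplying an equality of two eigenvalues by `(l₁l₂l₃)²` gives a rational relation
among `(l₁l₂)²`, `(l₁l₃)²`, `(l₂l₃)²` with coefficients `kᵢ² - hᵢ²`; independence forces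
these to vanish. -/

section RatIndependent

variable {x₁ x₂ x₃ : ℝ}
  (hindep : ∀ q₁ q₂ q₃ : ℚ, (q₁, q₂, q₃) ≠ (0, 0, 0) →
    (q₁ : ℝ) * x₁ + (q₂ : ℝ) * x₂ + (q₃ : ℝ) * x₃ ≠ 0)
include hindep

theorem rat_coeffs_eq_zero_of_independent {q₁ q₂ q₃ : ℚ}
    (h : (q₁ : ℝ) * x₁ + (q₂ : ℝ) * x₂ + (q₃ : ℝ) * x₃ = 0) :
    q₁ = 0 ∧ q₂ = 0 ∧ q₃ = 0 := by
  by_contra hne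
  exact hindep q₁ q₂ q₃ (by simpa [Prod.ext_iff] using hne) h

theorem ne_zero_of_independent : x₁ ≠ 0 ∧ x₂ ≠ 0 ∧ x₃ ≠ 0 :=
  ⟨by simpa using hindep 1 0 0 (by simp), by simpa using hindep 0 1 0 (by simp),
    by simpa using hindep 0 0 1 (by simp)⟩

end RatIndependent

theorem div_sq_add_div_sq_add_div_sq_mul {l₁ l₂ l₃ : ℝ} (h₁ : l₁ ≠ 0) (h₂ : l₂ ≠ 0)
    (h₃ : l₃ ≠ 0) (a₁ a₂ a₃ : ℝ) :
    (a₁ / l₁ ^ 2 + a₂ / l₂ ^ 2 + a₃ / l₃ ^ 2) * (l₁ * l₂ * l₃) ^ 2 =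
      a₃ * (l₁ * l₂) ^ 2 + a₂ * (l₁ * l₃) ^ 2 + a₁ * (l₂ * l₃) ^ 2 := by
  field_simp
  ring

theorem Nat.eq_of_cast_sq_sub_sq_eq_zero {m n : ℕ} (h : (m : ℚ) ^ 2 - (n : ℚ) ^ 2 = 0) :
    m = n :=
  Nat.pow_left_injective two_ne_zero (by exact_mod_cast sub_eq_zero.mp h)

theorem box_eigenvalues_simple_general
    (l₁ l₂ l₃ : ℝ)
    (hindep : ∀ q₁ q₂ q₃ : ℚ, (q₁, q₂, q₃) ≠ (0, 0, 0) →
      (q₁ : ℝ) * (l₁ * l₂) ^ 2 + (q₂ : ℝ) * (l₁ * l₃) ^ 2 +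
        (q₃ : ℝ) * (l₂ * l₃) ^ 2 ≠ 0)
    (k₁ k₂ k₃ h₁ h₂ h₃ : ℕ)
    (heq : (k₁ : ℝ) ^ 2 / l₁ ^ 2 + (k₂ : ℝ) ^ 2 / l₂ ^ 2 + (k₃ : ℝ) ^ 2 / l₃ ^ 2 =
           (h₁ : ℝ) ^ 2 / l₁ ^ 2 + (h₂ : ℝ) ^ 2 / l₂ ^ 2 + (h₃ : ℝ) ^ 2 / l₃ ^ 2) :
    (k₁, k₂, k₃) = (h₁, h₂, h₃) := by
  obtain ⟨hl₁₂, -, hl₂₃⟩ := ne_zero_of_independent hindep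
  have hl₁ : l₁ ≠ 0 := left_ne_zero_of_mul (pow_ne_zero_iff two_ne_zero |>.mp hl₁₂)
  obtain ⟨hl₂, hl₃⟩ := mul_ne_zero_iff.mp (pow_ne_zero_iff two_ne_zero |>.mp hl₂₃)
  have hsum : ((k₁ : ℝ) ^ 2 - h₁ ^ 2) / l₁ ^ 2 + ((k₂ : ℝ) ^ 2 - h₂ ^ 2) / l₂ ^ 2 +
      ((k₃ : ℝ) ^ 2 - h₃ ^ 2) / l₃ ^ 2 = 0 := by
    simp only [sub_div]
    linarith
  have hcomb := div_sq_add_div_sq_add_div_sq_mul hl₁ hl₂ hl₃ _ _ _ ▸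
    congrArg (· * (l₁ * l₂ * l₃) ^ 2) hsum
  obtain ⟨e₃, e₂, e₁⟩ := rat_coeffs_eq_zero_of_independent hindep
    (q₁ := (k₃ : ℚ) ^ 2 - h₃ ^ 2) (q₂ := (k₂ : ℚ) ^ 2 - h₂ ^ 2) (q₃ := (k₁ : ℚ) ^ 2 - h₁ ^ 2)
    (by push_cast; simpa using hcomb)
  rw [Nat.eq_of_cast_sq_sub_sq_eq_zero e₁, Nat.eq_of_cast_sq_sub_sq_eq_zero e₂,
    Nat.eq_of_cast_sq_sub_sq_eq_zero e₃]

/-- If `(l₁l₂)²`, `(l₁l₃)²`, `(l₂l₃)²` are `ℚ`-linearly independent, then the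
eigenvalues `π²(k₁²/l₁² + k₂²/l₂² + k₃²/l₃²)` of the Dirichlet Laplacian on the
box `(0,l₁)×(0,l₂)×(0,l₃)` are simple: the map
`(k₁,k₂,k₃) ↦ k₁²/l₁² + k₂²/l₂² + k₃²/l₃²` is injective on positive integer
triples. -/
theorem box_eigenvalues_simple
    (l₁ l₂ l₃ : ℝ) (hl₁ : 0 < l₁) (hl₂ : 0 < l₂) (hl₃ : 0 < l₃)
    (hindep : ∀ q₁ q₂ q₃ : ℚ, (q₁, q₂, q₃) ≠ (0, 0, 0) →
      (q₁ : ℝ) * (l₁ * l₂) ^ 2 + (q₂ : ℝ) * (l₁ * l₃) ^ 2 +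
        (q₃ : ℝ) * (l₂ * l₃) ^ 2 ≠ 0)
    (k₁ k₂ k₃ h₁ h₂ h₃ : ℕ)
    (hk₁ : 0 < k₁) (hk₂ : 0 < k₂) (hk₃ : 0 < k₃)
    (hh₁ : 0 < h₁) (hh₂ : 0 < h₂) (hh₃ : 0 < h₃)
    (heq : (k₁ : ℝ) ^ 2 / l₁ ^ 2 + (k₂ : ℝ) ^ 2 / l₂ ^ 2 + (k₃ : ℝ) ^ 2 / l₃ ^ 2 =
           (h₁ : ℝ) ^ 2 / l₁ ^ 2 + (h₂ : ℝ) ^ 2 / l₂ ^ 2 + (h₃ : ℝ) ^ 2 / l₃ ^ 2) :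
    (k₁, k₂, k₃) = (h₁, h₂, h₃) :=
  box_eigenvalues_simple_general l₁ l₂ l₃ hindep k₁ k₂ k₃ h₁ h₂ h₃ heq
end

section
/- Let β₁, β₂, β₃ be positive real numbers that are algebraically independent over ℚ, and let C be a nonzero real number. Then the elements of the family, indexed by triples of positive integers (k₁,k₂,k₃), given by C k₁² k₂² k₃² / [ (β₁k₁² + 1)(β₂k₂² + 1)(β₃k₃² + 1) ], are ℚ-linearly independent. -/
/-!
Since `k² / (β k² + 1) = (β + 1/k²)⁻¹`, every term is `C` times a product of simple fractions
`∏ᵢ (βᵢ - aᵢ)⁻¹` with rational poles `aᵢ = -1/kᵢ²`. Multiplying a vanishing rational combination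
of such products by all the denominators gives a polynomial relation among the `βᵢ` with rational
coefficients; algebraic independence makes that polynomial zero, and evaluating it at the poles
`(a_{m₁}, a_{m₂}, a_{m₃})` of a single index `m` isolates the coefficient of `m`, which must vanish.
-/

open MvPolynomial Finset

theorem AlgebraicIndependent.sub_algebraMap_ne_zero {σ R A : Type*} [CommRing R] [Nontrivial R]
    [CommRing A] [Algebra R A] {x : σ → A} (hx : AlgebraicIndependent R x) (i : σ) (c : R) :
    x i - algebraMap R A c ≠ 0 := fun h =>
  hx.transcendental i (sub_eq_zero.mp h ▸ isAlgebraic_algebraMap c)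

section ClearDenominators

variable {σ ι F : Type*} [Fintype σ] [DecidableEq ι] [CommRing F]

/-- The numerator of `∑ k ∈ s, g k • ∏ i, (X i - a (k i))⁻¹` over the common denominator
`∏ i, ∏ b ∈ s.image (· i), (X i - a b)`. -/
noncomputable def clearedNumerator (s : Finset (σ → ι)) (g : (σ → ι) → F) (a : ι → F) :
    MvPolynomial σ F :=
  ∑ k ∈ s, C (g k) * ∏ i, ∏ b ∈ (s.image (· i)).erase (k i), (X i - C (a b))

theorem aeval_clearedNumerator {A : Type*} [CommRing A] [Algebra F A] (s : Finset (σ → ι))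
    (g : (σ → ι) → F) (a : ι → F) (y : σ → A) :
    aeval y (clearedNumerator s g a) =
      ∑ k ∈ s, algebraMap F A (g k) *
        ∏ i, ∏ b ∈ (s.image (· i)).erase (k i), (y i - algebraMap F A (a b)) := by
  simp [clearedNumerator, map_prod]

theorem aeval_clearedNumerator_eq_mul_sum {K : Type*} [Field K] [Algebra F K]
    (s : Finset (σ → ι)) (g : (σ → ι) → F) (a : ι → F) {y : σ → K}
    (hy : ∀ i b, y i - algebraMap F K (a b) ≠ 0) :
    aeval y (clearedNumerator s g a) =
      (∏ i, ∏ b ∈ s.image (· i), (y i - algebraMap F K (a b))) *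
        ∑ k ∈ s, g k • ∏ i, (y i - algebraMap F K (a (k i)))⁻¹ := by
  rw [aeval_clearedNumerator, mul_sum]
  refine sum_congr rfl fun k hk => ?_
  have hmem : ∀ i, k i ∈ s.image (· i) := fun i => mem_image_of_mem (· i) hk
  simp_rw [← mul_prod_erase _ _ (hmem _), prod_mul_distrib, Algebra.smul_def, prod_inv_distrib]
  field_simp [prod_ne_zero_iff.mpr fun i _ => hy i (k i)]

theorem aeval_clearedNumerator_at_node (s : Finset (σ → ι)) (g : (σ → ι) → F) (a : ι → F)
    {m : σ → ι} (hm : m ∈ s) :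
    aeval (a ∘ m) (clearedNumerator s g a) =
      g m * ∏ i, ∏ b ∈ (s.image (· i)).erase (m i), (a (m i) - a b) := by
  rw [aeval_clearedNumerator]
  simp only [Algebra.algebraMap_self, RingHom.id_apply, Function.comp_apply]
  refine sum_eq_single_of_mem m hm fun k hk hkm => ?_
  -- some coordinate `i` of `k` differs from that of `m`, and then the factor `b = m i` vanishes
  obtain ⟨i, hi⟩ := Function.ne_iff.mp hkm
  have hnode : m i ∈ (s.image (· i)).erase (k i) :=
    mem_erase.mpr ⟨Ne.symm hi, mem_image_of_mem (· i) hm⟩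
  rw [prod_eq_zero (mem_univ i) (prod_eq_zero hnode (sub_self _)), mul_zero]

end ClearDenominators

theorem AlgebraicIndependent.linearIndependent_prod_inv_sub {σ ι F K : Type*} [Fintype σ]
    [CommRing F] [IsDomain F] [Field K] [Algebra F K] {x : σ → K}
    (hx : AlgebraicIndependent F x) {a : ι → F} (ha : Function.Injective a) :
    LinearIndependent F fun k : σ → ι => ∏ i, (x i - algebraMap F K (a (k i)))⁻¹ := by
  classical
  refine linearIndependent_iff'.mpr fun s g hg m hm => ?_
  have hzero : clearedNumerator s g a = 0 := hx.eq_zero_of_aeval_eq_zero _ <| by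
    rw [aeval_clearedNumerator_eq_mul_sum s g a fun i b => hx.sub_algebraMap_ne_zero i (a b),
      hg, mul_zero]
  have hnodes : ∏ i, ∏ b ∈ (s.image (· i)).erase (m i), (a (m i) - a b) ≠ 0 :=
    prod_ne_zero_iff.mpr fun i _ => prod_ne_zero_iff.mpr fun b hb =>
      sub_ne_zero.mpr (ha.ne (ne_of_mem_erase hb).symm)
  have hspecial := aeval_clearedNumerator_at_node s g a hm
  rw [hzero, map_zero, eq_comm, mul_eq_zero] at hspecial
  exact hspecial.resolve_right hnodes

theorem neg_inv_sq_injective : Function.Injective fun n : ℕ => -((n : ℚ) ^ 2)⁻¹ := by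
  intro m n h
  simp only [neg_inj, inv_inj] at h
  exact Nat.pow_left_injective two_ne_zero (by exact_mod_cast h)

theorem qLinIndep_triple_family_general
    (β₁ β₂ β₃ : ℝ)
    (hindep : AlgebraicIndependent ℚ ![β₁, β₂, β₃])
    (C : ℝ) (hC : C ≠ 0) :
    ∀ (s : Finset (ℕ × ℕ × ℕ)),
      (∀ k ∈ s, 0 < k.1 ∧ 0 < k.2.1 ∧ 0 < k.2.2) →
      ∀ q : ℕ × ℕ × ℕ → ℚ, (∃ k ∈ s, q k ≠ 0) →
      ∑ k ∈ s, (q k : ℝ) *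
          (C * k.1 ^ 2 * k.2.1 ^ 2 * k.2.2 ^ 2 /
            ((β₁ * k.1 ^ 2 + 1) * (β₂ * k.2.1 ^ 2 + 1) * (β₃ * k.2.2 ^ 2 + 1))) ≠ 0 := by
  intro s hs q ⟨m, hm, hqm⟩ hsum
  have hcoords : Function.Injective fun k : ℕ × ℕ × ℕ => ![k.1, k.2.1, k.2.2] := by
    intro k l h
    simp only [Matrix.vecCons_inj] at h
    exact Prod.ext h.1 (Prod.ext h.2.1 h.2.2.1)
  have hli := (hindep.linearIndependent_prod_inv_sub neg_inv_sq_injective).comp _ hcoords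
  have hterm : ∀ k ∈ s, (q k : ℝ) *
      (C * k.1 ^ 2 * k.2.1 ^ 2 * k.2.2 ^ 2 /
        ((β₁ * k.1 ^ 2 + 1) * (β₂ * k.2.1 ^ 2 + 1) * (β₃ * k.2.2 ^ 2 + 1))) =
      C * (q k • ∏ i, (![β₁, β₂, β₃] i -
        algebraMap ℚ ℝ (-((![k.1, k.2.1, k.2.2] i : ℚ) ^ 2)⁻¹))⁻¹) := by
    intro k hk
    obtain ⟨h₁, h₂, h₃⟩ := hs k hk
    simp only [Fin.prod_univ_three, Matrix.cons_val_zero, Matrix.cons_val_one, Matrix.cons_val,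
      eq_ratCast, Rat.cast_neg, Rat.cast_inv, Rat.cast_pow, Rat.cast_natCast, sub_neg_eq_add,
      Rat.smul_def]
    field_simp
  rw [sum_congr rfl hterm, ← mul_sum] at hsum
  exact hqm (linearIndependent_iff'.mp hli s q ((mul_eq_zero.mp hsum).resolve_left hC) m hm)

/-- If `β₁, β₂, β₃ > 0` are algebraically independent over `ℚ` and `C ≠ 0`, then
the family `C k₁²k₂²k₃² / ((β₁k₁²+1)(β₂k₂²+1)(β₃k₃²+1))`, indexed by triples of
positive integers, is `ℚ`-linearly independent. -/
theorem qLinIndep_triple_family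
    (β₁ β₂ β₃ : ℝ) (hβ₁ : 0 < β₁) (hβ₂ : 0 < β₂) (hβ₃ : 0 < β₃)
    (hindep : AlgebraicIndependent ℚ ![β₁, β₂, β₃])
    (C : ℝ) (hC : C ≠ 0) :
    ∀ (s : Finset (ℕ × ℕ × ℕ)),
      (∀ k ∈ s, 0 < k.1 ∧ 0 < k.2.1 ∧ 0 < k.2.2) →
      ∀ q : ℕ × ℕ × ℕ → ℚ, (∃ k ∈ s, q k ≠ 0) →
      ∑ k ∈ s, (q k : ℝ) *
          (C * k.1 ^ 2 * k.2.1 ^ 2 * k.2.2 ^ 2 /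
            ((β₁ * k.1 ^ 2 + 1) * (β₂ * k.2.1 ^ 2 + 1) * (β₃ * k.2.2 ^ 2 + 1))) ≠ 0 :=
  qLinIndep_triple_family_general β₁ β₂ β₃ hindep C hC
end
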